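/- Let b_q(n) denote the number of direct sum decompositions of F_q^n into nonzero subspaces (the q-Bell number, with b_q(0) = 1). Then the exponential generating function identity holds: Σ_{n≥0} b_q(n) x^n / γ_n = exp(Σ_{r≥1} x^r / γ_r) as formal power series over ℚ. -/

import Mathlib

/-- The order of `GL_m(F_q)`. -/
def gma (q m : ℕ) : ℕ := ∏ i ∈ Finset.range m, (q ^ m - q ^ i)

/-- The `q`-Bell number: the number of direct sum decompositions of `F_q^n` into
nonzero subspaces (with `b_q(0) = 1`, by the empty decomposition). -/
noncomputable def qBell (n : ℕ) (F : Type) [Field F] [Fintype F] : ℕ :=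
  Nat.card {D : Finset (Submodule F (Fin n → F)) //
    (∀ V ∈ D, V ≠ ⊥) ∧
    sSupIndep (D : Set (Submodule F (Fin n → F))) ∧
    sSup (D : Set (Submodule F (Fin n → F))) = ⊤}

/-- The exponential `exp E = Σ_k E^k / k!` of a formal power series with zero constant
term (for the coefficient of `xⁿ` only `k ≤ n` contribute). -/
noncomputable def psExp (E : PowerSeries ℚ) : PowerSeries ℚ :=
  PowerSeries.mk fun n =>
    ∑ k ∈ Finset.range (n + 1), ((k.factorial : ℚ))⁻¹ * (PowerSeries.coeff (R := ℚ) n) (E ^ k)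


/-!
Fix dimensions `l₁, …, l_k` summing to `n = dim V`. An ordered decomposition
`V = W₁ ⊕ ⋯ ⊕ W_k` with `dim W_i = l_i`, together with a basis of each part, is the same thing as
a basis of `V` cut into blocks of sizes `l_i` (the parts are recovered as the spans of the blocks).
Counting bases, there are `γ_n / ∏ γ_{l_i}` such decompositions. Summing over all compositions
`l` of `n` into positive parts, the number of ordered decompositions into `k` nonzero parts is
`γ_n` times the coefficient of `xⁿ` in `E^k`, where `E = Σ_{r ≥ 1} x^r / γ_r`. The parts of a
decomposition are distinct, so forgetting their order divides this count by exactly `k!`.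
-/

open Module Finset Function
open scoped Nat

theorem gma_pos {q : ℕ} (hq : 1 < q) (m : ℕ) : 0 < gma q m :=
  prod_pos fun _ hi => Nat.sub_pos_of_lt (Nat.pow_lt_pow_right hq (mem_range.mp hi))

theorem Nat.card_eq_sum_card_fiber {α β : Type*} [Finite α] (f : α → β) (t : Finset β)
    (h : ∀ a, f a ∈ t) : Nat.card α = ∑ b ∈ t, Nat.card {a // f a = b} := by
  classical
  have := Fintype.ofFinite α
  rw [Nat.card_eq_fintype_card, ← Finset.card_univ, card_eq_sum_card_fiberwise fun a _ => h a]
  refine sum_congr rfl fun b _ => ?_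
  rw [Nat.card_eq_fintype_card, Fintype.card_subtype]

section Enumerations

variable {α : Type*} [DecidableEq α] {k : ℕ}

noncomputable def Finset.enumerationEquiv (s : Finset α) (hs : s.card = k) :
    {f : Fin k → α // univ.image f = s} ≃ (Fin k ≃ s) where
  toFun f := Equiv.ofBijective
    (fun i => ⟨f.1 i, by simpa [f.2] using mem_image_of_mem f.1 (mem_univ i)⟩) <| by
    refine (Fintype.bijective_iff_surjective_and_card _).mpr ⟨fun x => ?_, by simp [hs]⟩
    obtain ⟨i, -, hi⟩ := mem_image.mp (f.2.symm ▸ x.2 : (x : α) ∈ univ.image f.1)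
    exact ⟨i, Subtype.ext hi⟩
  invFun e := ⟨fun i => e i, by
    ext x
    simp only [mem_image, mem_univ, true_and]
    exact ⟨fun ⟨a, ha⟩ => ha ▸ (e a).2, fun hx => ⟨e.symm ⟨x, hx⟩, by simp⟩⟩⟩
  left_inv _ := rfl
  right_inv _ := Equiv.ext fun _ => rfl

theorem Finset.card_enumeration (s : Finset α) (hs : s.card = k) :
    Nat.card {f : Fin k → α // univ.image f = s} = k ! := by
  rw [Nat.card_congr (s.enumerationEquiv hs), Nat.card_eq_fintype_card,
    Fintype.card_equiv (s.equivFinOfCardEq hs).symm, Fintype.card_fin]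

theorem card_injective_image_eq_factorial_mul [Finite α] (P : Finset α → Prop) (k : ℕ) :
    Nat.card {f : Fin k → α // Injective f ∧ P (univ.image f)} =
      k ! * Nat.card {s : Finset α // P s ∧ s.card = k} := by
  classical
  have := Fintype.ofFinite α
  let g (f : {f : Fin k → α // Injective f ∧ P (univ.image f)}) :
      {s : Finset α // P s ∧ s.card = k} :=
    ⟨univ.image f.1, f.2.2, by rw [card_image_of_injective _ f.2.1, card_univ, Fintype.card_fin]⟩
  have hfiber (s : {s : Finset α // P s ∧ s.card = k}) : Nat.card {f // g f = s} = k ! := by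
    refine (Nat.card_congr ?_).trans (s.1.card_enumeration s.2.2)
    -- a map `Fin k → α` whose image has `k` elements is injective
    exact {
      toFun f := ⟨f.1.1, congrArg Subtype.val f.2⟩
      invFun f := ⟨⟨f.1, fun a b hab => card_image_iff.mp (by rw [f.2, s.2.2, card_univ,
          Fintype.card_fin]) (mem_coe.2 (mem_univ a)) (mem_coe.2 (mem_univ b)) hab,
          by rw [f.2]; exact s.2.1⟩, Subtype.ext f.2⟩
      left_inv _ := rfl
      right_inv _ := rfl }
  rw [Nat.card_eq_sum_card_fiber g univ fun _ => mem_univ _, sum_congr rfl fun s _ => hfiber s,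
    sum_const, card_univ, smul_eq_mul, mul_comm, Nat.card_eq_fintype_card]

end Enumerations

theorem iSupIndep_iff_sSupIndep_range {α ι : Type*} [CompleteLattice α] {t : ι → α}
    (ht : Injective t) : iSupIndep t ↔ sSupIndep (Set.range t) :=
  ⟨iSupIndep.sSupIndep_range, fun h =>
    ((sSupIndep_iff _).mp h).comp (f := Set.rangeFactorization t) fun _ _ hab =>
      ht (congrArg Subtype.val hab)⟩

theorem LinearIndependent.iSupIndep_span_sigma {R M ι : Type*} [Ring R] [AddCommGroup M]
    [Module R M] {α : ι → Type*} {v : (Σ i, α i) → M} (hv : LinearIndependent R v) :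
    iSupIndep fun i => Submodule.span R (Set.range fun a => v ⟨i, a⟩) := by
  have block : ∀ i, Set.range (fun a => v ⟨i, a⟩) = v '' (Sigma.fst ⁻¹' {i}) := by
    intro i; ext x; simp [Sigma.exists]
  intro i
  simp only [block, ← Submodule.span_iUnion₂, ← Set.image_iUnion₂]
  exact hv.disjoint_span_image (Set.disjoint_left.mpr fun a ha hb => by simp_all)

theorem iSupIndep.sum_finrank_eq {F V ι : Type*} [Field F] [AddCommGroup V] [Module F V]
    [FiniteDimensional F V] [Fintype ι] {A : ι → Submodule F V} (hind : iSupIndep A)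
    (hsup : ⨆ i, A i = ⊤) : ∑ i, finrank F (A i) = finrank F V := by
  classical
  have h := DirectSum.isInternal_submodule_of_iSupIndep_of_iSup_eq_top hind hsup
  rw [← (LinearEquiv.ofBijective (DirectSum.coeLinearMap A) h).finrank_eq, Module.finrank_directSum]

instance Module.Basis.finite {ι R M : Type*} [Finite ι] [Semiring R] [AddCommMonoid M]
    [Module R M] [Finite M] : Finite (Basis ι R M) :=
  _root_.Finite.of_injective _ DFunLike.coe_injective

section Bases

variable {F V ι : Type*} [Field F] [AddCommGroup V] [Module F V] [Fintype ι]

noncomputable def basisEquivLinearIndependent [FiniteDimensional F V]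
    (h : Fintype.card ι = finrank F V) : Basis ι F V ≃ {s : ι → V // LinearIndependent F s} where
  toFun b := ⟨b, b.linearIndependent⟩
  invFun s := basisOfLinearIndependentOfCardEqFinrank' s.1 s.2 h
  left_inv b := Basis.eq_of_apply_eq fun _ => by simp
  right_inv s := Subtype.ext (by simp)

theorem card_basis_eq_gma [Fintype F] [Finite V] (h : Fintype.card ι = finrank F V) :
    Nat.card (Basis ι F V) = gma (Fintype.card F) (finrank F V) := by
  let e : ι ≃ Fin (finrank F V) := Fintype.equivFinOfCardEq h
  have reindex : {s : ι → V // LinearIndependent F s} ≃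
      {s : Fin (finrank F V) → V // LinearIndependent F s} :=
    Equiv.subtypeEquiv (e.arrowCongr (Equiv.refl V)) fun s => (linearIndependent_equiv e.symm).symm
  rw [Nat.card_congr ((basisEquivLinearIndependent h).trans reindex), card_linearIndependent le_rfl,
    gma, Fin.prod_univ_eq_prod_range (fun i => Fintype.card F ^ finrank F V - Fintype.card F ^ i)]

end Bases

section Decompositions

variable {F V ι : Type*} [Field F] [AddCommGroup V] [Module F V]

variable (F V) in
abbrev OrderedDecomp (ι : Type*) : Type _ :=
  {f : ι → Submodule F V // iSupIndep f ∧ ⨆ i, f i = ⊤}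

namespace OrderedDecomp

variable {α : ι → Type*}

noncomputable def collectedBasis (f : OrderedDecomp F V ι) (b : ∀ i, Basis (α i) F (f.1 i)) :
    Basis (Σ i, α i) F V := by
  classical
  exact (DirectSum.isInternal_submodule_of_iSupIndep_of_iSup_eq_top f.2.1 f.2.2).collectedBasis b

@[simp]
theorem collectedBasis_apply (f : OrderedDecomp F V ι) (b : ∀ i, Basis (α i) F (f.1 i))
    (a : Σ i, α i) : f.collectedBasis b a = b a.1 a.2 := by
  classical
  simp [collectedBasis, DirectSum.IsInternal.collectedBasis_coe]

noncomputable def ofBasis (b : Basis (Σ i, α i) F V) : OrderedDecomp F V ι :=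
  ⟨fun i => Submodule.span F (Set.range fun a => b ⟨i, a⟩),
    b.linearIndependent.iSupIndep_span_sigma, by
    simp only [← Submodule.span_iUnion, ← Set.range_sigma_eq_iUnion_range, b.span_eq]⟩

theorem ofBasis_collectedBasis (f : OrderedDecomp F V ι) (b : ∀ i, Basis (α i) F (f.1 i)) :
    ofBasis (f.collectedBasis b) = f := by
  refine Subtype.ext (funext fun i => ?_)
  have hblock : (Set.range fun a => (b i a : V)) = (f.1 i).subtype '' Set.range (b i) := by
    rw [← Set.range_comp]; rfl
  simp only [ofBasis, collectedBasis_apply, hblock, ← Submodule.map_span, (b i).span_eq,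
    Submodule.map_subtype_top]

noncomputable def withDimsBasisEquiv (l : ι → ℕ) :
    (Σ f : {f : OrderedDecomp F V ι // ∀ i, finrank F (f.1 i) = l i},
        ∀ i, Basis (Fin (l i)) F (f.1.1 i)) ≃ Basis (Σ i, Fin (l i)) F V := by
  refine Equiv.ofBijective (fun p => p.1.1.collectedBasis p.2) ⟨?_, fun b => ?_⟩
  · rintro ⟨⟨f, hf⟩, b⟩ ⟨⟨g, hg⟩, c⟩ h
    obtain rfl : f = g := by
      rw [← ofBasis_collectedBasis f b, ← ofBasis_collectedBasis g c]
      exact congrArg ofBasis h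
    have hbc : b = c := funext fun i => Basis.eq_of_apply_eq fun j =>
      Subtype.ext (by simpa using DFunLike.congr_fun h ⟨i, j⟩)
    subst hbc
    rfl
  · have hli : ∀ i, LinearIndependent F fun a : Fin (l i) => b ⟨i, a⟩ := fun i =>
      b.linearIndependent.comp (Sigma.mk i) sigma_mk_injective
    refine ⟨⟨⟨ofBasis b, fun i => ?_⟩, fun i => Basis.span (hli i)⟩,
      Basis.eq_of_apply_eq fun a => ?_⟩
    · exact (finrank_span_eq_card (hli i)).trans (Fintype.card_fin _)
    · exact (collectedBasis_apply _ _ a).trans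
        (congrArg Subtype.val (Basis.span_apply (hli a.1) a.2))

theorem card_withDims_mul_prod_gma [Fintype F] [Finite V] [Fintype ι] {l : ι → ℕ}
    (hl : ∑ i, l i = finrank F V) :
    Nat.card {f : OrderedDecomp F V ι // ∀ i, finrank F (f.1 i) = l i} *
      ∏ i, gma (Fintype.card F) (l i) = gma (Fintype.card F) (finrank F V) := by
  have := Fintype.ofFinite {f : OrderedDecomp F V ι // ∀ i, finrank F (f.1 i) = l i}
  have hcard_parts : ∀ (f : {f : OrderedDecomp F V ι // ∀ i, finrank F (f.1 i) = l i}),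
      Nat.card (∀ i, Basis (Fin (l i)) F (f.1.1 i)) = ∏ i, gma (Fintype.card F) (l i) := by
    intro f
    rw [Nat.card_pi]
    refine prod_congr rfl fun i _ => ?_
    rw [card_basis_eq_gma (by rw [Fintype.card_fin, f.2 i]), f.2 i]
  rw [← card_basis_eq_gma (ι := Σ i, Fin (l i)) (by simpa using hl),
    ← Nat.card_congr (withDimsBasisEquiv l), Nat.card_sigma]
  simp only [hcard_parts, sum_const, card_univ, smul_eq_mul, Nat.card_eq_fintype_card]

end OrderedDecomp

end Decompositions

section Series

open PowerSeries

variable {F V ι : Type*} [Field F] [Fintype F] [AddCommGroup V] [Module F V] [Finite V]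
  [Fintype ι]

theorem OrderedDecomp.card_ne_bot_withDims_div_gma {l : ι → ℕ} (hl : ∑ i, l i = finrank F V) :
    (Nat.card {f : {f : OrderedDecomp F V ι // ∀ i, f.1 i ≠ ⊥} //
        ∀ i, finrank F (f.1.1 i) = l i} : ℚ) / gma (Fintype.card F) (finrank F V) =
      ∏ i, if l i = 0 then 0 else 1 / (gma (Fintype.card F) (l i) : ℚ) := by
  by_cases hzero : ∃ i, l i = 0
  · obtain ⟨i, hi⟩ := hzero
    have : IsEmpty {f : {f : OrderedDecomp F V ι // ∀ i, f.1 i ≠ ⊥} //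
        ∀ i, finrank F (f.1.1 i) = l i} :=
      ⟨fun f => f.1.2 i (Submodule.finrank_eq_zero.mp ((f.2 i).trans hi))⟩
    rw [Nat.card_of_isEmpty, Nat.cast_zero, zero_div]
    exact Eq.symm (prod_eq_zero (mem_univ i) (if_pos hi))
  push Not at hzero
  have hgma : ∀ m, (gma (Fintype.card F) m : ℚ) ≠ 0 := fun m =>
    Nat.cast_ne_zero.mpr (gma_pos Fintype.one_lt_card m).ne'
  have hcard := card_withDims_mul_prod_gma (F := F) hl
  rw [← Nat.card_congr (Equiv.subtypeSubtypeEquivSubtype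
    (p := fun f : OrderedDecomp F V ι => ∀ i, f.1 i ≠ ⊥) fun hf i h0 =>
    hzero i (by rw [← hf i, h0, finrank_bot]))] at hcard
  have hprod := prod_ne_zero_iff.mpr fun i (_ : i ∈ univ) => hgma (l i)
  rw [prod_congr rfl fun i _ => if_neg (hzero i), prod_div_distrib, prod_const_one,
    div_eq_div_iff (hgma _) hprod, one_mul]
  exact_mod_cast hcard

theorem OrderedDecomp.card_ne_bot_div_gma_eq_coeff [DecidableEq ι] :
    (Nat.card {f : OrderedDecomp F V ι // ∀ i, f.1 i ≠ ⊥} : ℚ) /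
        gma (Fintype.card F) (finrank F V) =
      coeff (finrank F V)
        ((mk fun r => if r = 0 then 0 else 1 / (gma (Fintype.card F) r : ℚ)) ^ Fintype.card ι) := by
  let dims (f : {f : OrderedDecomp F V ι // ∀ i, f.1 i ≠ ⊥}) : ι →₀ ℕ :=
    Finsupp.equivFunOnFinite.symm fun i => finrank F (f.1.1 i)
  have hdims : ∀ f, dims f ∈ finsuppAntidiag univ (finrank F V) := fun f =>
    mem_finsuppAntidiag.mpr ⟨by simpa [dims] using f.1.2.1.sum_finrank_eq f.1.2.2, by simp⟩
  rw [← card_univ (α := ι), ← prod_const, coeff_prod, Nat.card_eq_sum_card_fiber dims _ hdims,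
    Nat.cast_sum, sum_div]
  refine sum_congr rfl fun l hl => ?_
  simp only [coeff_mk]
  rw [← card_ne_bot_withDims_div_gma (by simpa using (mem_finsuppAntidiag.mp hl).1)]
  congr 2
  exact Nat.card_congr (Equiv.subtypeEquivRight fun f => by simp [dims, Finsupp.ext_iff])

end Series

section Unordered

variable {F V : Type*} [Field F] [AddCommGroup V] [Module F V]

def IsDecomposition (D : Finset (Submodule F V)) : Prop :=
  (∀ W ∈ D, W ≠ ⊥) ∧ sSupIndep (D : Set (Submodule F V)) ∧ sSup (D : Set (Submodule F V)) = ⊤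

theorem isDecomposition_image_iff {ι : Type*} [Fintype ι] [DecidableEq (Submodule F V)]
    (f : ι → Submodule F V) :
    ((iSupIndep f ∧ ⨆ i, f i = ⊤) ∧ ∀ i, f i ≠ ⊥) ↔
      Injective f ∧ IsDecomposition (univ.image f) := by
  have hrange : ((univ.image f : Finset _) : Set (Submodule F V)) = Set.range f := by simp
  simp only [IsDecomposition, hrange, sSup_range, forall_mem_image, mem_univ, forall_const]
  constructor
  · rintro ⟨⟨hind, hsup⟩, hne⟩
    have hinj := hind.injective hne
    exact ⟨hinj, hne, (iSupIndep_iff_sSupIndep_range hinj).mp hind, hsup⟩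
  · rintro ⟨hinj, hne, hind, hsup⟩
    exact ⟨⟨(iSupIndep_iff_sSupIndep_range hinj).mpr hind, hsup⟩, hne⟩

theorem IsDecomposition.card_le_finrank [FiniteDimensional F V] {D : Finset (Submodule F V)}
    (hD : IsDecomposition D) : D.card ≤ finrank F V := by
  classical
  let S : Set (Submodule F V) := D
  calc D.card = Fintype.card S := by simp [S]
    _ = Fintype.card {W : S // W.1 ≠ ⊥} :=
      (Fintype.card_congr (Equiv.subtypeUnivEquiv fun W : S => hD.1 W.1 W.2)).symm
    _ ≤ finrank F V := ((sSupIndep_iff _).mp hD.2.1).subtype_ne_bot_le_finrank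

theorem card_isDecomposition_eq_sum [Fintype F] [Finite V] :
    (Nat.card {D : Finset (Submodule F V) // IsDecomposition D} : ℚ) =
      ∑ k ∈ range (finrank F V + 1),
        (Nat.card {f : OrderedDecomp F V (Fin k) // ∀ i, f.1 i ≠ ⊥} : ℚ) / k ! := by
  classical
  rw [Nat.card_eq_sum_card_fiber (fun D : {D // IsDecomposition D} => D.1.card) _
    fun D => mem_range_succ_iff.mpr D.2.card_le_finrank, Nat.cast_sum]
  refine sum_congr rfl fun k _ => ?_
  rw [eq_div_iff (Nat.cast_ne_zero.mpr k.factorial_ne_zero),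
    Nat.card_congr ((Equiv.subtypeSubtypeEquivSubtypeInter _ _).trans
      (Equiv.subtypeEquivRight isDecomposition_image_iff)),
    Nat.card_congr (Equiv.subtypeSubtypeEquivSubtypeInter IsDecomposition fun D => D.card = k),
    card_injective_image_eq_factorial_mul]
  push_cast
  ring

end Unordered

/-- The exponential generating function identity
`Σ_{n≥0} b_q(n) xⁿ/γ_n = exp (Σ_{r≥1} x^r/γ_r)` for the `q`-Bell numbers. -/
theorem qBell_egf (q : ℕ)
    (F : Type) [Field F] [Fintype F] (hF : Fintype.card F = q) :
    PowerSeries.mk (fun n => (qBell n F : ℚ) / gma q n) =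
      psExp (PowerSeries.mk fun r => if r = 0 then 0 else 1 / (gma q r : ℚ)) := by
  subst hF
  ext n
  have hdim : finrank F (Fin n → F) = n := finrank_fin_fun F
  have hqBell : qBell n F = Nat.card {D : Finset (Submodule F (Fin n → F)) // IsDecomposition D} :=
    rfl
  rw [PowerSeries.coeff_mk, psExp, PowerSeries.coeff_mk, hqBell, card_isDecomposition_eq_sum, hdim,
    sum_div]
  refine sum_congr rfl fun k _ => ?_
  have hcoeff := OrderedDecomp.card_ne_bot_div_gma_eq_coeff (F := F) (V := Fin n → F) (ι := Fin k)
  rw [hdim, Fintype.card_fin] at hcoeff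
  rw [div_right_comm, hcoeff, div_eq_inv_mul]
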